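/- Kari's 14-tile protoset P is aperiodic: there exists a Wang tiling t : ℤ² → P satisfying the matching conditions, and every Wang tiling with protoset P admits no (a,b) ∈ ℤ² ∖ {(0,0)} with t(i+a, j+b) = t(i,j) for all (i,j) ∈ ℤ². -/

import Mathlib

/-! Let `S_j(N)` be the sum of the north colors of the tiles `(0, j), …, (N - 1, j)` and
`q_j ∈ {2, 2/3}` the multiplier of the family used in row `j` (the Boolean tags force one family
per row). Summing the tile equations `q n + w = s + e` along a row telescopes to
`q_j S_j(N) - S_{j-1}(N) = w_N - w_0 ∈ [-2, 2]`, so over `k` rows the product of multipliers,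
`2^k / 3^d ≠ 1`, relates `S_k(N)` to `S_0(N)` up to an error bounded independently of `N`.

A horizontal period `a` kills the error for `N = a`, so `2^k S_k(a) = 3^d S_0(a)` for every `k`,
which is impossible for the positive integer `S_0(a)`. A period `(a, b)` with `b > 0` makes
`S_b(N)` and `S_0(N)` differ by a bounded amount, whereas `S_b(N)` grows linearly (no two adjacent
north colors vanish): `(2^b / 3^d - 1) S_b(N)` cannot stay bounded.

Tilings exist: the map `α ↦ 2α` on `[2/3, 1)`, `α ↦ 2α/3` on `[1, 2)` is a bijection of
`[2/3, 2)`, and along a two-sided orbit `(α_j)` the Beatty differences `⌊(i+1) α_j⌋ - ⌊i α_j⌋`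
are the north colors of row `j`. -/

/-- A Kari tile: north and south colors in `ℚ`, west and east colors in `ℚ × Bool`
(the Boolean tag distinguishes the two families, e.g. the colors `0` and `0'`). -/
abbrev KariTile := ℚ × ℚ × (ℚ × Bool) × (ℚ × Bool)

namespace KariTile
def n (T : KariTile) : ℚ := T.1
def s (T : KariTile) : ℚ := T.2.1
def w (T : KariTile) : ℚ × Bool := T.2.2.1
def e (T : KariTile) : ℚ × Bool := T.2.2.2
end KariTile

/-- Kari's 14-tile protoset: the union of the 4 tiles of the family `T₂`
(multiplier 2) and the 10 tiles of the family `T_{2/3}` (multiplier 2/3). -/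
def kariProtoset : Set KariTile :=
  {T | (T.w.2 = false ∧ T.e.2 = false ∧
        T.n ∈ ({0, 1} : Set ℚ) ∧ T.s ∈ ({1, 2} : Set ℚ) ∧
        T.w.1 ∈ ({-1, 0} : Set ℚ) ∧ T.e.1 ∈ ({-1, 0} : Set ℚ) ∧
        2 * T.n + T.w.1 = T.s + T.e.1) ∨
       (T.w.2 = true ∧ T.e.2 = true ∧
        T.n ∈ ({1, 2} : Set ℚ) ∧ T.s ∈ ({0, 1, 2} : Set ℚ) ∧
        T.w.1 ∈ ({-1/3, 0, 1/3, 2/3} : Set ℚ) ∧ T.e.1 ∈ ({-1/3, 0, 1/3, 2/3} : Set ℚ) ∧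
        (2/3) * T.n + T.w.1 = T.s + T.e.1)}

/-- `t : ℤ² → KariTile` is a Wang tiling with Kari's protoset. -/
def IsKariTiling (t : ℤ × ℤ → KariTile) : Prop :=
  (∀ ij : ℤ × ℤ, t ij ∈ kariProtoset) ∧
  (∀ i j : ℤ, (t (i, j)).e = (t (i + 1, j)).w ∧ (t (i, j)).n = (t (i, j + 1)).s)

open Finset

section Floor

variable {R : Type*} [Field R] [LinearOrder R] [IsStrictOrderedRing R] [FloorRing R]

lemma Int.floor_add_sub_floor_eq_or (a b : R) :
    ⌊a + b⌋ - ⌊a⌋ = ⌊b⌋ ∨ ⌊a + b⌋ - ⌊a⌋ = ⌊b⌋ + 1 := by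
  have := Int.le_floor_add a b
  have := Int.le_floor_add_floor a b
  omega

lemma Int.two_mul_floor_sub_floor_two_mul_eq_or (a : R) :
    2 * ⌊a⌋ - ⌊2 * a⌋ = 0 ∨ 2 * ⌊a⌋ - ⌊2 * a⌋ = -1 := by
  have := Int.floor_add_sub_floor_eq_or a a
  rw [two_mul a]
  omega

lemma Int.two_mul_floor_sub_three_mul_floor_mem_Icc (a : R) :
    2 * ⌊a⌋ - 3 * ⌊2 / 3 * a⌋ ∈ Set.Icc (-1) 2 := by
  have h1 := Int.floor_le a
  have h2 := Int.lt_floor_add_one a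
  have h3 := Int.floor_le (2 / 3 * a)
  have h4 := Int.lt_floor_add_one (2 / 3 * a)
  have hlo : (-2 : R) < ((2 * ⌊a⌋ - 3 * ⌊2 / 3 * a⌋ : ℤ) : R) := by push_cast; linarith
  have hhi : ((2 * ⌊a⌋ - 3 * ⌊2 / 3 * a⌋ : ℤ) : R) < 3 := by push_cast; linarith
  constructor
  · have : (-2 : ℤ) < 2 * ⌊a⌋ - 3 * ⌊2 / 3 * a⌋ := by exact_mod_cast hlo
    omega
  · have : 2 * ⌊a⌋ - 3 * ⌊2 / 3 * a⌋ < (3 : ℤ) := by exact_mod_cast hhi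
    omega

end Floor

lemma sum_range_shift_sub_sum_range {G : Type*} [AddCommGroup G] (f : ℕ → G) (a N : ℕ) :
    ∑ k ∈ range N, f (a + k) - ∑ k ∈ range N, f k =
      ∑ l ∈ range a, f (N + l) - ∑ l ∈ range a, f l := by
  have h1 := sum_range_add f a N
  have h2 := sum_range_add f N a
  rw [add_comm a N, h2] at h1
  rw [sub_eq_sub_iff_add_eq_add, add_comm (∑ k ∈ range N, f (a + k)), ← h1, add_comm]

lemma abs_sum_range_shift_sub_sum_range_le {f : ℕ → ℚ} {M : ℚ} (hf : ∀ k, |f k| ≤ M)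
    (a N : ℕ) :
    |∑ k ∈ range N, f (a + k) - ∑ k ∈ range N, f k| ≤ 2 * a * M := by
  have hsum (c : ℕ) : |∑ l ∈ range a, f (c + l)| ≤ a * M := by
    simpa using
      (abs_sum_le_sum_abs _ _).trans (sum_le_sum fun l (_ : l ∈ range a) => hf (c + l))
  have h0 := hsum 0
  simp only [zero_add] at h0
  rw [sum_range_shift_sub_sum_range]
  linarith [abs_sub (∑ l ∈ range a, f (N + l)) (∑ l ∈ range a, f l), hsum N]

lemma exists_abs_sum_range_shift_sub_le {f : ℤ → ℚ} {M : ℚ} (hf : ∀ i, |f i| ≤ M) (a : ℤ) :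
    ∃ C, ∀ N : ℕ, |∑ k ∈ range N, f (k + a) - ∑ k ∈ range N, f k| ≤ C := by
  obtain ⟨n, rfl | rfl⟩ := Int.eq_nat_or_neg a
  · refine ⟨2 * n * M, fun N => ?_⟩
    simpa [add_comm] using abs_sum_range_shift_sub_sum_range_le (fun k => hf k) n N
  · refine ⟨2 * n * M, fun N => ?_⟩
    have h := abs_sum_range_shift_sub_sum_range_le (f := fun k : ℕ => f (k - n)) (fun _ => hf _) n N
    rw [abs_sub_comm]
    simpa [← sub_eq_add_neg] using h

def familyMul (b : Bool) : ℚ := if b then 2 / 3 else 2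

namespace KariTile

variable {T T' : KariTile}

lemma w_snd_eq_e_snd (hT : T ∈ kariProtoset) : T.w.2 = T.e.2 := by
  rcases hT with ⟨hw, he, -⟩ | ⟨hw, he, -⟩ <;> rw [hw, he]

lemma familyMul_mul_n_add_w_fst (hT : T ∈ kariProtoset) :
    familyMul T.w.2 * T.n + T.w.1 = T.s + T.e.1 := by
  rcases hT with ⟨hw, -, -, -, -, -, h⟩ | ⟨hw, -, -, -, -, -, h⟩ <;>
    simpa [familyMul, hw] using h

lemma n_eq_zero_or_one_or_two (hT : T ∈ kariProtoset) : T.n = 0 ∨ T.n = 1 ∨ T.n = 2 := by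
  rcases hT with ⟨-, -, hn, -⟩ | ⟨-, -, hn, -⟩ <;>
    simp only [Set.mem_insert_iff, Set.mem_singleton_iff] at hn <;> tauto

lemma abs_w_fst_le_one (hT : T ∈ kariProtoset) : |T.w.1| ≤ 1 := by
  rcases hT with ⟨-, -, -, -, hw, -⟩ | ⟨-, -, -, -, hw, -⟩
  · rcases hw with h | h <;> rw [h] <;> norm_num
  · rcases hw with h | h | h | h <;> rw [h] <;> norm_num [abs_le]

lemma one_le_n_add_n (hT : T ∈ kariProtoset) (hT' : T' ∈ kariProtoset) (h : T.e = T'.w) :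
    1 ≤ T.n + T'.n := by
  rcases n_eq_zero_or_one_or_two hT with hn | hn | hn <;>
  rcases n_eq_zero_or_one_or_two hT' with hn' | hn' | hn' <;> rw [hn, hn'] <;> norm_num
  -- north color `0` forces `(w, e) = (0, -1)`, and west color `-1` forces north color `1`
  rcases hT with ⟨-, -, -, hs, hw, -, hrel⟩ | ⟨-, -, hn2, -⟩
  · rcases hT' with ⟨-, -, -, hs', -, he', hrel'⟩ | ⟨-, -, hn2', -⟩
    · simp only [Set.mem_insert_iff, Set.mem_singleton_iff] at hs hw hs' he'
      rw [← h] at hrel'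
      rcases hs with hs | hs <;> rcases hw with hw | hw <;> rcases hs' with hs' | hs' <;>
        rcases he' with he' | he' <;> linarith
    · simp [hn'] at hn2'
  · simp [hn] at hn2

end KariTile

def rowMul (t : ℤ × ℤ → KariTile) (j : ℤ) : ℚ := familyMul (t (0, j)).w.2

def rowSum (t : ℤ × ℤ → KariTile) (j : ℤ) (N : ℕ) : ℚ := ∑ k ∈ range N, (t (k, j)).n

def rowMulProd (t : ℤ × ℤ → KariTile) (k : ℕ) : ℚ := ∏ j ∈ range k, rowMul t (j + 1)

lemma exists_three_pow_mul_prod_familyMul {ι : Type*} (s : Finset ι) (b : ι → Bool) :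
    ∃ d : ℕ, 3 ^ d * ∏ i ∈ s, familyMul (b i) = 2 ^ #s := by
  classical
  induction s using Finset.induction_on with
  | empty => exact ⟨0, by simp⟩
  | insert i s hi ih =>
    obtain ⟨d, hd⟩ := ih
    rw [prod_insert hi, card_insert_of_notMem hi, pow_succ]
    cases b i
    · exact ⟨d, by rw [← hd, familyMul, if_neg Bool.false_ne_true]; ring⟩
    · exact ⟨d + 1, by rw [← hd, familyMul, if_pos rfl]; ring⟩

lemma exists_three_pow_mul_rowMulProd (t : ℤ × ℤ → KariTile) (k : ℕ) :
    ∃ d : ℕ, 3 ^ d * rowMulProd t k = 2 ^ k := by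
  simpa [rowMulProd, rowMul] using
    exists_three_pow_mul_prod_familyMul (range k) fun j => (t (0, j + 1)).w.2

lemma rowMulProd_ne_one (t : ℤ × ℤ → KariTile) {k : ℕ} (hk : k ≠ 0) :
    rowMulProd t k ≠ 1 := by
  obtain ⟨d, hd⟩ := exists_three_pow_mul_rowMulProd t k
  intro h
  rw [h, mul_one] at hd
  have hnat : 3 ^ d = 2 ^ k := by exact_mod_cast hd
  have : Even (3 ^ d) := hnat ▸ (Nat.even_pow.2 ⟨even_two, hk⟩)
  exact Nat.not_even_iff_odd.2 (Odd.pow (by decide)) this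

namespace IsKariTiling

variable {t : ℤ × ℤ → KariTile} (ht : IsKariTiling t)
include ht

lemma w_snd_eq (i j : ℤ) : (t (i, j)).w.2 = (t (0, j)).w.2 := by
  have hper : Function.Periodic (fun i => (t (i, j)).w.2) 1 := fun i => by
    simp only [← (ht.2 i j).1, ← KariTile.w_snd_eq_e_snd (ht.1 _)]
  simpa using hper.int_mul_eq i

lemma rowMul_mul_n_add_w_fst (i j : ℤ) :
    rowMul t j * (t (i, j)).n + (t (i, j)).w.1 = (t (i, j)).s + (t (i, j)).e.1 := by
  rw [rowMul, ← ht.w_snd_eq i j]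
  exact KariTile.familyMul_mul_n_add_w_fst (ht.1 _)

lemma rowMul_mul_rowSum_sub (j : ℤ) (N : ℕ) :
    rowMul t (j + 1) * rowSum t (j + 1) N - rowSum t j N =
      (t (N, j + 1)).w.1 - (t (0, j + 1)).w.1 := by
  have hcol (k : ℕ) : rowMul t (j + 1) * (t (k, j + 1)).n - (t (k, j)).n =
      (t ((k + 1 : ℕ), j + 1)).w.1 - (t (k, j + 1)).w.1 := by
    have h := ht.rowMul_mul_n_add_w_fst k (j + 1)
    rw [← (ht.2 k j).2, (ht.2 k (j + 1)).1] at h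
    push_cast
    linarith
  simp only [rowSum, mul_sum, ← sum_sub_distrib, hcol]
  exact sum_range_sub (fun k : ℕ => (t (k, j + 1)).w.1) N

lemma rowMulProd_mul_rowSum_sub (k N : ℕ) :
    rowMulProd t k * rowSum t k N - rowSum t 0 N =
      ∑ j ∈ range k, rowMulProd t j * ((t (N, j + 1)).w.1 - (t (0, j + 1)).w.1) := by
  have h := sum_range_sub (fun j : ℕ => rowMulProd t j * rowSum t j N) k
  rw [show rowMulProd t 0 = 1 from prod_range_zero _, one_mul, Nat.cast_zero] at h
  rw [← h]
  refine sum_congr rfl fun j _ => ?_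
  rw [← ht.rowMul_mul_rowSum_sub j N, rowMulProd, rowMulProd, prod_range_succ]
  push_cast
  ring

lemma abs_rowMulProd_mul_rowSum_sub_le (k N : ℕ) :
    |rowMulProd t k * rowSum t k N - rowSum t 0 N| ≤ ∑ j ∈ range k, 2 * |rowMulProd t j| := by
  rw [ht.rowMulProd_mul_rowSum_sub]
  refine (abs_sum_le_sum_abs _ _).trans (sum_le_sum fun j _ => ?_)
  rw [abs_mul, mul_comm]
  have hw := (abs_sub _ _).trans (add_le_add (KariTile.abs_w_fst_le_one (ht.1 (N, j + 1)))
    (KariTile.abs_w_fst_le_one (ht.1 (0, j + 1))))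
  gcongr
  linarith

lemma exists_rowSum_eq_intCast (j : ℤ) (N : ℕ) : ∃ z : ℤ, rowSum t j N = z := by
  refine sum_induction _ (fun q : ℚ => ∃ z : ℤ, q = z)
    (fun _ _ ⟨a, ha⟩ ⟨b, hb⟩ => ⟨a + b, by push_cast [ha, hb]; rfl⟩) ⟨0, by simp⟩ fun k _ => ?_
  rcases KariTile.n_eq_zero_or_one_or_two (ht.1 (k, j)) with h | h | h
  exacts [⟨0, by simp [h]⟩, ⟨1, by simp [h]⟩, ⟨2, by simp [h]⟩]

lemma le_rowSum_two_mul (j : ℤ) (M : ℕ) : (M : ℚ) ≤ rowSum t j (2 * M) := by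
  induction M with
  | zero => simp [rowSum]
  | succ M ih =>
    have hpair := KariTile.one_le_n_add_n (ht.1 (2 * M, j)) (ht.1 (2 * M + 1, j)) (ht.2 _ j).1
    rw [show 2 * (M + 1) = 2 * M + 1 + 1 by ring, rowSum, sum_range_succ, sum_range_succ]
    push_cast at hpair ⊢
    rw [rowSum] at ih
    linarith

lemma not_periodic_horizontal {a : ℤ} (ha : 0 < a) : ¬ ∀ i j, t (i + a, j) = t (i, j) := by
  intro hper
  lift a to ℕ using ha.le
  have hcol (j : ℤ) : t (a, j) = t (0, j) := by simpa using hper 0 j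
  have hexact (k : ℕ) : rowMulProd t k * rowSum t k a = rowSum t 0 a := by
    rw [← sub_eq_zero, ht.rowMulProd_mul_rowSum_sub]
    exact sum_eq_zero fun j _ => by rw [hcol, sub_self, mul_zero]
  obtain ⟨z₀, hz₀⟩ := ht.exists_rowSum_eq_intCast 0 a
  have hz₀_pos : 0 < z₀ := by
    have hdouble : rowSum t 0 (2 * a) = 2 * rowSum t 0 a := by
      rw [two_mul, rowSum, sum_range_add, two_mul]
      congr 1
      exact sum_congr rfl fun k _ => by rw [Nat.cast_add, add_comm, hper]
    have hlin := ht.le_rowSum_two_mul 0 a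
    have ha' : (1 : ℚ) ≤ a := Nat.one_le_cast.2 (by omega)
    have : (0 : ℚ) < z₀ := by rw [← hz₀]; linarith
    exact_mod_cast this
  -- `k = z₀` gives `z₀ < 2 ^ k`, yet `2 ^ k * rowSum t k a = 3 ^ d * z₀` forces `2 ^ k ∣ z₀`
  set k := z₀.toNat
  obtain ⟨d, hd⟩ := exists_three_pow_mul_rowMulProd t k
  obtain ⟨z, hz⟩ := ht.exists_rowSum_eq_intCast k a
  have hzz : (2 : ℤ) ^ k * z = 3 ^ d * z₀ := by
    have : (2 : ℚ) ^ k * z = 3 ^ d * z₀ := by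
      rw [← hz, ← hz₀, ← hexact k, ← hd]; ring
    exact_mod_cast this
  have hcop : IsCoprime ((2 : ℤ) ^ k) (3 ^ d) := (Int.isCoprime_iff_gcd_eq_one.2 rfl).pow
  have hdvd : (2 : ℤ) ^ k ∣ z₀ := hcop.dvd_of_dvd_mul_left ⟨z, hzz.symm⟩
  have hlt : z₀ < 2 ^ k := by
    have : ((k : ℕ) : ℤ) < ((2 ^ k : ℕ) : ℤ) := by exact_mod_cast Nat.lt_two_pow_self
    rwa [Int.toNat_of_nonneg hz₀_pos.le, Nat.cast_pow, Nat.cast_ofNat] at this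
  exact absurd (Int.le_of_dvd hz₀_pos hdvd) hlt.not_ge

lemma not_periodic_of_snd_pos (a : ℤ) {b : ℤ} (hb : 0 < b) :
    ¬ ∀ i j, t (i + a, j + b) = t (i, j) := by
  intro hper
  lift b to ℕ using hb.le
  have hP : rowMulProd t b - 1 ≠ 0 := sub_ne_zero.2 (rowMulProd_ne_one t (by omega))
  have hn (i : ℤ) : |(t (i, b)).n| ≤ 2 := by
    rcases KariTile.n_eq_zero_or_one_or_two (ht.1 (i, b)) with h | h | h <;> rw [h] <;> norm_num
  obtain ⟨C, hC⟩ := exists_abs_sum_range_shift_sub_le hn a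
  have hrow (N : ℕ) : rowSum t 0 N = ∑ k ∈ range N, (t (k + a, b)).n :=
    sum_congr rfl fun k _ => by rw [← hper k 0, zero_add]
  set C' := ∑ j ∈ range b, 2 * |rowMulProd t j| + C
  have hbound (N : ℕ) (hN : 0 ≤ rowSum t b N) : |rowMulProd t b - 1| * rowSum t b N ≤ C' := by
    rw [← abs_of_nonneg hN, ← abs_mul]
    calc |(rowMulProd t b - 1) * rowSum t b N|
        = |(rowMulProd t b * rowSum t b N - rowSum t 0 N) + (rowSum t 0 N - rowSum t b N)| := by
          ring_nf
      _ ≤ _ := abs_add_le _ _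
      _ ≤ C' := add_le_add (ht.abs_rowMulProd_mul_rowSum_sub_le b N) (hrow N ▸ hC N)
  -- `rowSum t b` grows linearly, so its multiple by `|rowMulProd t b - 1| > 0` is unbounded
  obtain ⟨M, hM⟩ := exists_nat_gt (C' / |rowMulProd t b - 1|)
  have hM' := ht.le_rowSum_two_mul b M
  have := hbound (2 * M) ((Nat.cast_nonneg M).trans hM')
  rw [div_lt_iff₀ (abs_pos.2 hP)] at hM
  nlinarith [abs_nonneg (rowMulProd t b - 1)]

end IsKariTiling

def floorMul (α : ℚ) (i : ℤ) : ℚ := ⌊i * α⌋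

-- With `q = familyMul b`, the carries `q ⌊i α⌋ - ⌊i q α⌋` on the vertical edges make
-- `q n + w = s + e` an identity.
def beattyTile (b : Bool) (α : ℚ) (i : ℤ) : KariTile :=
  (floorMul α (i + 1) - floorMul α i,
    floorMul (familyMul b * α) (i + 1) - floorMul (familyMul b * α) i,
    (familyMul b * floorMul α i - floorMul (familyMul b * α) i, b),
    (familyMul b * floorMul α (i + 1) - floorMul (familyMul b * α) (i + 1), b))

lemma floorMul_add_one_sub (α : ℚ) (i : ℤ) :
    floorMul α (i + 1) - floorMul α i = ((⌊i * α + α⌋ - ⌊i * α⌋ : ℤ) : ℚ) := by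
  simp [floorMul, add_mul]

lemma two_mul_floorMul_sub (α : ℚ) (i : ℤ) :
    2 * floorMul α i - floorMul (2 * α) i = ((2 * ⌊i * α⌋ - ⌊2 * (i * α)⌋ : ℤ) : ℚ) := by
  simp [floorMul, mul_left_comm]

lemma two_thirds_mul_floorMul_sub (α : ℚ) (i : ℤ) :
    2 / 3 * floorMul α i - floorMul (2 / 3 * α) i =
      ((2 * ⌊i * α⌋ - 3 * ⌊2 / 3 * (i * α)⌋ : ℤ) : ℚ) / 3 := by
  simp only [floorMul, mul_left_comm (i : ℚ)]
  push_cast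
  ring

lemma familyMul_mul_beattyTile_n_add (b : Bool) (α : ℚ) (i : ℤ) :
    familyMul b * (beattyTile b α i).n + (beattyTile b α i).w.1 =
      (beattyTile b α i).s + (beattyTile b α i).e.1 := by
  simp only [beattyTile, KariTile.n, KariTile.s, KariTile.w, KariTile.e]
  ring

lemma beattyTile_true_mem {α : ℚ} (h1 : 1 ≤ α) (h2 : α < 2) (i : ℤ) :
    beattyTile true α i ∈ kariProtoset := by
  have hfl : ⌊α⌋ = 1 := Int.floor_eq_iff.2 ⟨by simpa using h1, by norm_num; linarith⟩
  have hfl' : ⌊2 / 3 * α⌋ = 0 ∨ ⌊2 / 3 * α⌋ = 1 := by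
    have := Int.floor_nonneg.2 (by linarith : (0 : ℚ) ≤ 2 / 3 * α)
    have := Int.floor_lt.2 (by push_cast; linarith : 2 / 3 * α < ((2 : ℤ) : ℚ))
    omega
  have hw (k : ℤ) : 2 / 3 * floorMul α k - floorMul (2 / 3 * α) k ∈
      ({-1 / 3, 0, 1 / 3, 2 / 3} : Set ℚ) := by
    rw [two_thirds_mul_floorMul_sub]
    obtain ⟨h1, h2⟩ := Int.two_mul_floor_sub_three_mul_floor_mem_Icc ((k : ℚ) * α)
    interval_cases (2 * ⌊(k : ℚ) * α⌋ - 3 * ⌊2 / 3 * ((k : ℚ) * α)⌋) <;> norm_num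
  refine Or.inr ⟨rfl, rfl, ?_, ?_, hw i, hw (i + 1), familyMul_mul_beattyTile_n_add true α i⟩
  · change floorMul α (i + 1) - floorMul α i ∈ _
    rw [floorMul_add_one_sub]
    rcases Int.floor_add_sub_floor_eq_or ((i : ℚ) * α) α with h | h <;> rw [h, hfl] <;> norm_num
  · change floorMul (2 / 3 * α) (i + 1) - floorMul (2 / 3 * α) i ∈ _
    rw [floorMul_add_one_sub]
    rcases Int.floor_add_sub_floor_eq_or ((i : ℚ) * (2 / 3 * α)) (2 / 3 * α) with h | h <;>
      rcases hfl' with h' | h' <;> rw [h, h'] <;> norm_num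

lemma beattyTile_false_mem {α : ℚ} (h1 : 2 / 3 ≤ α) (h2 : α < 1) (i : ℤ) :
    beattyTile false α i ∈ kariProtoset := by
  have hfl : ⌊α⌋ = 0 := Int.floor_eq_iff.2 ⟨by norm_num; linarith, by norm_num; linarith⟩
  have hfl' : ⌊2 * α⌋ = 1 := Int.floor_eq_iff.2 ⟨by norm_num; linarith, by norm_num; linarith⟩
  have hw (k : ℤ) : 2 * floorMul α k - floorMul (2 * α) k ∈ ({-1, 0} : Set ℚ) := by
    rw [two_mul_floorMul_sub]
    rcases Int.two_mul_floor_sub_floor_two_mul_eq_or ((k : ℚ) * α) with h | h <;> rw [h] <;>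
      norm_num
  refine Or.inl ⟨rfl, rfl, ?_, ?_, hw i, hw (i + 1), familyMul_mul_beattyTile_n_add false α i⟩
  · change floorMul α (i + 1) - floorMul α i ∈ _
    rw [floorMul_add_one_sub]
    rcases Int.floor_add_sub_floor_eq_or ((i : ℚ) * α) α with h | h <;> rw [h, hfl] <;> norm_num
  · change floorMul (2 * α) (i + 1) - floorMul (2 * α) i ∈ _
    rw [floorMul_add_one_sub]
    rcases Int.floor_add_sub_floor_eq_or ((i : ℚ) * (2 * α)) (2 * α) with h | h <;>
      rw [h, hfl'] <;> norm_num

lemma beattyTile_mem {α : ℚ} (hα : α ∈ Set.Ico (2 / 3) 2) (i : ℤ) :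
    beattyTile (decide (1 ≤ α)) α i ∈ kariProtoset := by
  by_cases h : 1 ≤ α
  · simpa [h] using beattyTile_true_mem h hα.2 i
  · simpa [h] using beattyTile_false_mem hα.1 (not_le.1 h) i

def kariMap (α : ℚ) : ℚ := familyMul (decide (1 ≤ α)) * α

lemma kariMap_of_one_le {α : ℚ} (h : 1 ≤ α) : kariMap α = 2 / 3 * α := by
  simp [kariMap, familyMul, h]

lemma kariMap_of_lt_one {α : ℚ} (h : α < 1) : kariMap α = 2 * α := by
  simp [kariMap, familyMul, h.not_ge]

lemma kariMap_mem {α : ℚ} (hα : α ∈ Set.Ico (2 / 3) 2) : kariMap α ∈ Set.Ico (2 / 3) 2 := by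
  obtain ⟨h1, h2⟩ := hα
  by_cases h : 1 ≤ α
  · rw [kariMap_of_one_le h]; constructor <;> linarith
  · rw [kariMap_of_lt_one (not_le.1 h)]; constructor <;> linarith

def kariPerm : Equiv.Perm (Set.Ico (2 / 3 : ℚ) 2) where
  toFun α := ⟨kariMap α, kariMap_mem α.2⟩
  invFun α := ⟨if 4 / 3 ≤ (α : ℚ) then α / 2 else 3 / 2 * α, by
    obtain ⟨α, h1, h2⟩ := α
    split_ifs <;> constructor <;> linarith⟩
  left_inv α := by
    obtain ⟨α, h1, h2⟩ := α
    ext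
    change (if 4 / 3 ≤ kariMap α then kariMap α / 2 else 3 / 2 * kariMap α) = α
    by_cases h : 1 ≤ α
    · rw [kariMap_of_one_le h, if_neg (by linarith)]; ring
    · rw [kariMap_of_lt_one (not_le.1 h), if_pos (by linarith)]; ring
  right_inv α := by
    obtain ⟨α, h1, h2⟩ := α
    ext
    change kariMap (if 4 / 3 ≤ α then α / 2 else 3 / 2 * α) = α
    by_cases h : 4 / 3 ≤ α
    · rw [if_pos h, kariMap_of_lt_one (by linarith)]; ring
    · rw [if_neg h, kariMap_of_one_le (by linarith)]; ring

def kariTiling (x : ℤ → ℚ) (p : ℤ × ℤ) : KariTile :=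
  beattyTile (decide (1 ≤ x p.2)) (x p.2) p.1

lemma isKariTiling_kariTiling {x : ℤ → ℚ} (hx : ∀ j, x j ∈ Set.Ico (2 / 3) 2)
    (hstep : ∀ j, kariMap (x (j + 1)) = x j) : IsKariTiling (kariTiling x) := by
  refine ⟨fun p => beattyTile_mem (hx p.2) p.1, fun i j => ⟨rfl, ?_⟩⟩
  simp only [kariTiling, beattyTile, KariTile.n, KariTile.s]
  rw [← kariMap, hstep]

lemma exists_isKariTiling : ∃ t, IsKariTiling t := by
  let x (j : ℤ) : ℚ := (kariPerm ^ (-j)) ⟨1, by norm_num, by norm_num⟩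
  refine ⟨kariTiling x, isKariTiling_kariTiling (fun j => Subtype.prop _) fun j => ?_⟩
  change ((kariPerm * kariPerm ^ (-(j + 1))) _ : ℚ) = _
  rw [← zpow_one_add, show 1 + -(j + 1) = -j by ring]

/-- Kari's 14-tile protoset is aperiodic: tilings exist, and none is periodic. -/
theorem stmt5 :
    (∃ t : ℤ × ℤ → KariTile, IsKariTiling t) ∧
    (∀ t : ℤ × ℤ → KariTile, IsKariTiling t →
      ¬ ∃ ab : ℤ × ℤ, ab ≠ (0, 0) ∧
        ∀ i j : ℤ, t (i + ab.1, j + ab.2) = t (i, j)) := by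
  refine ⟨exists_isKariTiling, fun t ht ⟨⟨a, b⟩, hab, hper⟩ => ?_⟩
  have hneg (i j : ℤ) : t (i + -a, j + -b) = t (i, j) := by
    simpa [← sub_eq_add_neg] using (hper (i - a) (j - b)).symm
  rcases lt_trichotomy b 0 with hb | rfl | hb
  · exact ht.not_periodic_of_snd_pos (-a) (neg_pos.2 hb) hneg
  · rcases lt_trichotomy a 0 with ha | rfl | ha
    · exact ht.not_periodic_horizontal (neg_pos.2 ha) (by simpa using hneg)
    · exact hab rfl
    · exact ht.not_periodic_horizontal ha (by simpa using hper)
  · exact ht.not_periodic_of_snd_pos a hb hper
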